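/- Let C be a Krull-Schmidt category with local descending chain condition on ideals. Then every idempotent ideal of C is generated by a set of identity morphisms if and only if the transfinite radical rad_C* is zero. -/

import Mathlib

/-!
Write `T_I` for the ideal generated by the identity morphisms lying in an ideal `I`. Splitting
morphisms along Krull–Schmidt decompositions gives `I ⊆ T_I + (I ∩ rad)`. If `I = I²`, squaring
this inclusion pushes the radical part one power deeper, and the local d.c.c. carries the
inclusion through limit ordinals, because at a fixed pair of objects the chain `I ∩ rad^β` is
eventually constant. Hence `I ⊆ T_I + (I ∩ rad*)`, so `I = T_I` once `rad* = 0`.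

Conversely, in an essentially small category the chain `rad^α` stabilises globally, so
`rad* = rad^λ = (rad^λ)²` for a large limit ordinal `λ`: the ideal `rad*` is idempotent. If it is
generated by identities, these identities lie in `rad`, and an identity in the radical is zero,
as `𝟙 - 𝟙 ≫ 𝟙` would be invertible.
-/

open CategoryTheory CategoryTheory.Limits

universe w v u

structure CatIdeal (C : Type u) [Category.{v} C] [Preadditive C] where
  mem : ∀ {X Y : C}, (X ⟶ Y) → Prop
  zero_mem : ∀ {X Y : C}, mem (0 : X ⟶ Y)
  add_mem : ∀ {X Y : C} {f g : X ⟶ Y}, mem f → mem g → mem (f + g)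
  comp_mem_left : ∀ {X Y Z : C} {f : X ⟶ Y} (g : Y ⟶ Z), mem f → mem (f ≫ g)
  comp_mem_right : ∀ {X Y Z : C} (f : X ⟶ Y) {g : Y ⟶ Z}, mem g → mem (f ≫ g)

namespace CatIdeal

variable {C : Type u} [Category.{v} C] [Preadditive C]

instance : LE (CatIdeal C) :=
  ⟨fun I J => ∀ {X Y : C} {f : X ⟶ Y}, I.mem f → J.mem f⟩

/-- The ideal of all morphisms. -/
def top (C : Type u) [Category.{v} C] [Preadditive C] : CatIdeal C where
  mem _ := True
  zero_mem := trivial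
  add_mem := by intros; trivial
  comp_mem_left := by intros; trivial
  comp_mem_right := by intros; trivial

/-- The ideal generated by a class of morphisms. -/
def span (S : ∀ {X Y : C}, (X ⟶ Y) → Prop) : CatIdeal C where
  mem f := ∀ J : CatIdeal C, (∀ {A B : C} {g : A ⟶ B}, S g → J.mem g) → J.mem f
  zero_mem := fun J _ => J.zero_mem
  add_mem := by intro X Y f g hf hg J hS; exact J.add_mem (hf J hS) (hg J hS)
  comp_mem_left := by intro X Y Z f g hf J hS; exact J.comp_mem_left g (hf J hS)
  comp_mem_right := by intro X Y Z f g hg J hS; exact J.comp_mem_right f (hg J hS)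

/-- The product of two ideals: the ideal generated by all composites `g ≫ h`
with `g ∈ I` and `h ∈ J`. -/
def mul (I J : CatIdeal C) : CatIdeal C :=
  span (fun {X Z} f => ∃ (Y : C) (g : X ⟶ Y) (h : Y ⟶ Z), I.mem g ∧ J.mem h ∧ f = g ≫ h)

/-- An ideal is idempotent if it equals its square. -/
def IsIdempotent (I : CatIdeal C) : Prop := I = I.mul I

/-- The intersection of a family of ideals. -/
def iInter {ι : Sort*} (F : ι → CatIdeal C) : CatIdeal C where
  mem f := ∀ i, (F i).mem f
  zero_mem := fun i => (F i).zero_mem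
  add_mem := by intro X Y f g hf hg i; exact (F i).add_mem (hf i) (hg i)
  comp_mem_left := by intro X Y Z f g hf i; exact (F i).comp_mem_left g (hf i)
  comp_mem_right := by intro X Y Z f g hg i; exact (F i).comp_mem_right f (hg i)

/-- Finite powers of an ideal: `npow I n` is the ideal generated by `n`-fold
composites of morphisms from `I` (with `npow I 0` the ideal of all morphisms). -/
def npow (I : CatIdeal C) : ℕ → CatIdeal C
  | 0 => top C
  | n + 1 => (npow I n).mul I

/-- The largest limit-or-zero ordinal `≤ α`, namely `ω * (α / ω)`. -/
noncomputable def limitPart (α : Ordinal.{w}) : Ordinal.{w} :=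
  Ordinal.omega0 * (α / Ordinal.omega0)

theorem limitPart_lt {α : Ordinal.{w}} (h0 : α ≠ 0) (hl : ¬ Order.IsSuccLimit α) :
    limitPart α < α := by
  have hle : limitPart α ≤ α := Ordinal.mul_div_le α Ordinal.omega0
  rcases lt_or_eq_of_le hle with h | h
  · exact h
  · exfalso
    rcases eq_or_ne (α / Ordinal.omega0) 0 with hq | hq
    · exact h0 (by rw [← h]; simp [limitPart, hq])
    · exact hl (by rw [← h]; exact Ordinal.isSuccLimit_mul_left Ordinal.isSuccLimit_omega0 (pos_iff_ne_zero.2 hq))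

end CatIdeal

open Ordinal Classical in
/-- Transfinite powers of an ideal `I`: `tpow I 0` is the ideal of all morphisms,
`tpow I n` (for finite `n ≥ 1`) is the ideal generated by `n`-fold composites of
morphisms from `I`, `tpow I α = ⋂_{β < α} tpow I β` at limit ordinals `α`, and
`tpow I (β + n) = (tpow I β) ^ (n + 1)` for `β` limit and `1 ≤ n < ω`. -/
noncomputable def CatIdeal.tpow {C : Type u} [Category.{v} C] [Preadditive C]
    (I : CatIdeal C) : Ordinal.{w} → CatIdeal C
  | α =>
    if h0 : α = 0 then CatIdeal.top C
    else if hl : Order.IsSuccLimit α then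
      CatIdeal.iInter (fun β : {β : Ordinal.{w} // β < α} =>
        have := β.2
        CatIdeal.tpow I β.1)
    else
      (have : Ordinal.pred α < α :=
        Ordinal.pred_lt_iff_not_isSuccPrelimit.2 (fun hp => hl ⟨fun hm => h0 (hm.eq_bot.trans Ordinal.bot_eq_zero), hp⟩)
       CatIdeal.tpow I (Ordinal.pred α)).mul
        (if Ordinal.omega0 ≤ α then
          have := CatIdeal.limitPart_lt h0 hl
          CatIdeal.tpow I (CatIdeal.limitPart α)
         else I)
  termination_by α => α

namespace CatIdeal

/-- The intersection `I* = ⋂_α I^α` of all transfinite powers of `I`. -/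
noncomputable def tstar {C : Type u} [Category.{v} C] [Preadditive C] (I : CatIdeal C) : CatIdeal C :=
  iInter (fun α : Ordinal.{v} => tpow I α)

end CatIdeal

section KS

open CategoryTheory CategoryTheory.Limits

variable (C : Type u) [Category.{v} C] [Preadditive C]

/-- `X` is a biproduct (finite direct sum) of the finite family `Y`,
witnessed by projections and inclusions. -/
def IsBiproductOf (X : C) {n : ℕ} (Y : Fin n → C) : Prop :=
  ∃ (p : ∀ i, X ⟶ Y i) (s : ∀ i, Y i ⟶ X),
    (∀ i, s i ≫ p i = 𝟙 (Y i)) ∧ (∀ i j, i ≠ j → s i ≫ p j = 0) ∧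
    (∑ i, p i ≫ s i) = 𝟙 X

/-- An object is indecomposable if it is nonzero and has no idempotent endomorphisms
other than `0` and the identity (i.e. it admits no nontrivial direct sum decomposition). -/
def IsIndecomposableObj (X : C) : Prop :=
  ¬ IsZero X ∧ ∀ e : X ⟶ X, e ≫ e = e → e = 0 ∨ e = 𝟙 X

/-- The radical of a Krull-Schmidt category: the ideal generated by all non-invertible
morphisms between indecomposable objects. -/
def catRadical : CatIdeal C :=
  CatIdeal.span (fun {X Y} f => IsIndecomposableObj C X ∧ IsIndecomposableObj C Y ∧ ¬ IsIso f)

/-- The transfinite radical `rad_C* = ⋂_α rad_C^α`. -/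
noncomputable def catTransRadical : CatIdeal C := CatIdeal.tstar (catRadical C)

/-- A Krull-Schmidt category: every object decomposes as a finite direct sum of objects
with local endomorphism rings. -/
def IsKrullSchmidt : Prop :=
  ∀ X : C, ∃ (n : ℕ) (Y : Fin n → C),
    (∀ i, IsLocalRing (End (Y i))) ∧ IsBiproductOf C X Y

/-- Local descending chain condition on ideals: every descending chain of ideals,
evaluated at any fixed pair of objects, stabilizes. -/
def HasLocalDCC : Prop :=
  ∀ (I : ℕ → CatIdeal C), (∀ n, I (n + 1) ≤ I n) →
    ∀ X Y : C, ∃ n, ∀ m, n ≤ m → ∀ f : X ⟶ Y, (I m).mem f ↔ (I n).mem f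

/-- The ideal generated by the identity morphisms of the objects in `S`. -/
def identityIdeal (S : Set C) : CatIdeal C :=
  CatIdeal.span (fun {X Y} f => ∃ h : X = Y, X ∈ S ∧ f = CategoryTheory.eqToHom h)

/-- An ideal is zero if it consists exactly of the zero morphisms. -/
def CatIdeal.IsZeroIdeal {C : Type u} [Category.{v} C] [Preadditive C] (I : CatIdeal C) : Prop :=
  ∀ {X Y : C} {f : X ⟶ Y}, I.mem f → f = 0

end KS


namespace CatIdeal

variable {C : Type u} [Category.{v} C] [Preadditive C]

@[ext]
theorem ext {I J : CatIdeal C} (h : ∀ {X Y : C} (f : X ⟶ Y), I.mem f ↔ J.mem f) : I = J := by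
  obtain ⟨mI, _⟩ := I
  obtain ⟨mJ, _⟩ := J
  obtain rfl : @mI = @mJ := by
    funext X Y f
    exact propext (h f)
  rfl

instance : PartialOrder (CatIdeal C) where
  le I J := I ≤ J
  le_refl _ _ _ _ := id
  le_trans _ _ _ h₁ h₂ _ _ _ hf := h₂ (h₁ hf)
  le_antisymm _ _ h₁ h₂ := ext fun _ => ⟨h₁, h₂⟩

instance : Max (CatIdeal C) where
  max I J :=
    { mem := fun f => ∃ g h, I.mem g ∧ J.mem h ∧ f = g + h
      zero_mem := ⟨0, 0, I.zero_mem, J.zero_mem, (add_zero 0).symm⟩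
      add_mem := by
        rintro X Y f f' ⟨g, h, hg, hh, rfl⟩ ⟨g', h', hg', hh', rfl⟩
        exact ⟨g + g', h + h', I.add_mem hg hg', J.add_mem hh hh', add_add_add_comm _ _ _ _⟩
      comp_mem_left := by
        rintro X Y Z f k ⟨g, h, hg, hh, rfl⟩
        exact ⟨g ≫ k, h ≫ k, I.comp_mem_left k hg, J.comp_mem_left k hh, Preadditive.add_comp ..⟩
      comp_mem_right := by
        rintro X Y Z k f ⟨g, h, hg, hh, rfl⟩
        exact ⟨k ≫ g, k ≫ h, I.comp_mem_right k hg, J.comp_mem_right k hh, Preadditive.comp_add ..⟩ }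

instance : Min (CatIdeal C) where
  min I J :=
    { mem := fun f => I.mem f ∧ J.mem f
      zero_mem := ⟨I.zero_mem, J.zero_mem⟩
      add_mem := fun hf hg => ⟨I.add_mem hf.1 hg.1, J.add_mem hf.2 hg.2⟩
      comp_mem_left := fun g hf => ⟨I.comp_mem_left g hf.1, J.comp_mem_left g hf.2⟩
      comp_mem_right := fun f _ hg => ⟨I.comp_mem_right f hg.1, J.comp_mem_right f hg.2⟩ }

instance : Lattice (CatIdeal C) where
  sup := max
  inf := min
  le_sup_left I J _ _ f hf := ⟨f, 0, hf, J.zero_mem, (add_zero f).symm⟩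
  le_sup_right I J _ _ f hf := ⟨0, f, I.zero_mem, hf, (zero_add f).symm⟩
  sup_le _ _ K h₁ h₂ := by
    rintro X Y f ⟨g, h, hg, hh, rfl⟩
    exact K.add_mem (h₁ hg) (h₂ hh)
  inf_le_left _ _ _ _ _ hf := hf.1
  inf_le_right _ _ _ _ _ hf := hf.2
  le_inf _ _ _ h₁ h₂ _ _ _ hf := ⟨h₁ hf, h₂ hf⟩

instance : OrderBot (CatIdeal C) where
  bot :=
    { mem := fun f => f = 0
      zero_mem := rfl
      add_mem := by rintro X Y f g rfl rfl; exact add_zero 0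
      comp_mem_left := by rintro X Y Z f g rfl; exact Limits.zero_comp
      comp_mem_right := by rintro X Y Z f g rfl; exact Limits.comp_zero }
  bot_le I _ _ _ hf := hf ▸ I.zero_mem

theorem isZeroIdeal_iff_le_bot {I : CatIdeal C} : I.IsZeroIdeal ↔ I ≤ ⊥ :=
  Iff.rfl

theorem mem_span_of {S : ∀ {X Y : C}, (X ⟶ Y) → Prop} {X Y : C} {f : X ⟶ Y} (hf : S f) :
    (span @S).mem f :=
  fun _ hJ => hJ hf

theorem span_le {S : ∀ {X Y : C}, (X ⟶ Y) → Prop} {J : CatIdeal C}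
    (h : ∀ {X Y : C} {f : X ⟶ Y}, S f → J.mem f) : span @S ≤ J :=
  fun hf => hf _ @h

theorem comp_mem_mul {I J : CatIdeal C} {X Y Z : C} {g : X ⟶ Y} {h : Y ⟶ Z}
    (hg : I.mem g) (hh : J.mem h) : (I.mul J).mem (g ≫ h) :=
  mem_span_of ⟨Y, g, h, hg, hh, rfl⟩

theorem mul_le_left (I J : CatIdeal C) : I.mul J ≤ I :=
  span_le fun ⟨_, _, h, hg, _, hf⟩ => hf ▸ I.comp_mem_left h hg

theorem mul_le_right (I J : CatIdeal C) : I.mul J ≤ J :=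
  span_le fun ⟨_, g, _, _, hh, hf⟩ => hf ▸ J.comp_mem_right g hh

theorem mul_mono {I I' J J' : CatIdeal C} (hI : I ≤ I') (hJ : J ≤ J') : I.mul J ≤ I'.mul J' :=
  span_le fun ⟨_, _, _, hg, hh, hf⟩ => hf ▸ comp_mem_mul (hI hg) (hJ hh)

theorem top_mul (J : CatIdeal C) : (top C).mul J = J := by
  refine le_antisymm (by exact mul_le_right _ _) fun {X _ f} hf => ?_
  simpa using comp_mem_mul (I := top C) (g := 𝟙 X) trivial hf

theorem sup_mul_self_le (T K : CatIdeal C) : (T ⊔ K).mul (T ⊔ K) ≤ T ⊔ K.mul K := by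
  refine span_le ?_
  rintro X Y f ⟨Z, u, v, ⟨g, h, hg, hh, rfl⟩, ⟨g', h', hg', hh', rfl⟩, rfl⟩
  refine ⟨g ≫ (g' + h') + h ≫ g', h ≫ h',
    T.add_mem (T.comp_mem_left _ hg) (T.comp_mem_right _ hg'), comp_mem_mul hh hh', ?_⟩
  simp only [Preadditive.add_comp, Preadditive.comp_add]
  abel

theorem sum_mem (I : CatIdeal C) {X Y : C} {ι : Type*} (s : Finset ι) {g : ι → (X ⟶ Y)}
    (h : ∀ i ∈ s, I.mem (g i)) : I.mem (∑ i ∈ s, g i) := by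
  classical
  induction s using Finset.induction_on with
  | empty => simpa using I.zero_mem
  | insert i s hi ih =>
    rw [Finset.sum_insert hi]
    exact I.add_mem (h i (s.mem_insert_self i)) (ih fun j hj => h j (s.mem_insert_of_mem hj))

theorem mem_conj_iff (I : CatIdeal C) {X X' Y Y' : C} (e : X ≅ X') (e' : Y ≅ Y') (f : X ⟶ Y) :
    I.mem (e.inv ≫ f ≫ e'.hom) ↔ I.mem f := by
  refine ⟨fun h => ?_, fun h => I.comp_mem_right _ (I.comp_mem_left _ h)⟩
  simpa using I.comp_mem_right e.hom (I.comp_mem_left e'.inv h)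

end CatIdeal

section IdentityIdeal

variable {C : Type u} [Category.{v} C] [Preadditive C]

theorem id_mem_identityIdeal {S : Set C} {X : C} (hX : X ∈ S) : (identityIdeal C S).mem (𝟙 X) :=
  CatIdeal.mem_span_of ⟨rfl, hX, (eqToHom_refl X rfl).symm⟩

theorem identityIdeal_le {S : Set C} {J : CatIdeal C} (h : ∀ X ∈ S, J.mem (𝟙 X)) :
    identityIdeal C S ≤ J :=
  CatIdeal.span_le fun ⟨hXY, hX, hf⟩ => by subst hXY hf; exact h _ hX

def CatIdeal.idObjects (I : CatIdeal C) : Set C := {X | I.mem (𝟙 X)}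

theorem identityIdeal_idObjects_le (I : CatIdeal C) : identityIdeal C I.idObjects ≤ I :=
  identityIdeal_le fun _ hX => hX

end IdentityIdeal

namespace CatIdeal

open Ordinal

variable {C : Type u} [Category.{v} C] [Preadditive C] (I : CatIdeal C)

theorem tpow_zero : tpow.{w} I 0 = top C := by
  rw [tpow, dif_pos rfl]

theorem tpow_of_isSuccLimit {α : Ordinal.{w}} (hα : Order.IsSuccLimit α) :
    tpow I α = iInter fun β : {β : Ordinal.{w} // β < α} => tpow I β.1 := by
  rw [tpow, dif_neg hα.pos.ne', dif_pos hα]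

theorem mem_tpow_of_isSuccLimit {α : Ordinal.{w}} (hα : Order.IsSuccLimit α) {X Y : C}
    {f : X ⟶ Y} (h : ∀ β < α, (tpow I β).mem f) : (tpow I α).mem f := by
  rw [tpow_of_isSuccLimit I hα]
  exact fun β => h β.1 β.2

theorem tpow_add_one (α : Ordinal.{w}) :
    tpow I (α + 1) =
      (tpow I α).mul (if ω ≤ α + 1 then tpow I (limitPart (α + 1)) else I) := by
  rw [tpow, dif_neg (add_pos_of_right zero_lt_one α).ne', dif_neg (Order.not_isSuccLimit_add_one α)]
  simp only [pred_add_one]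

theorem tpow_one : tpow.{w} I 1 = I := by
  rw [← zero_add 1, tpow_add_one, if_neg (by simp [one_lt_omega0]), tpow_zero, top_mul]

theorem tpow_antitone : Antitone (tpow.{w} I) := by
  suffices ∀ α β : Ordinal.{w}, β ≤ α → tpow I α ≤ tpow I β from fun β α h => this α β h
  intro α
  induction α using Ordinal.limitRecOn with
  | zero => intro β hβ; rw [nonpos_iff_eq_zero.1 hβ]
  | add_one a ih =>
    intro β hβ
    rcases hβ.eq_or_lt with rfl | hβ
    · exact fun hf => hf
    rw [tpow_add_one]
    exact fun hf => ih β (Order.lt_add_one_iff.1 hβ) (mul_le_left _ _ hf)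
  | limit α hα _ =>
    intro β hβ
    rcases hβ.eq_or_lt with rfl | hβ
    · exact fun hf => hf
    rw [tpow_of_isSuccLimit I hα]
    exact fun hf => hf ⟨β, hβ⟩

theorem inf_tpow_antitone (J : CatIdeal C) : Antitone fun β : Ordinal.{w} => J ⊓ tpow I β :=
  fun _ _ h _ _ _ hf => ⟨hf.1, tpow_antitone I h hf.2⟩

theorem limitPart_omega0_mul_add_one (γ : Ordinal.{w}) : limitPart (ω * γ + 1) = ω * γ := by
  rw [limitPart, mul_add_div γ omega0_ne_zero, div_eq_zero_of_lt one_lt_omega0, add_zero]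

theorem mul_self_tpow_le_tpow_add_one {α : Ordinal.{w}} (hα : α ≠ 0) :
    (tpow I α).mul (tpow I α) ≤ tpow I (α + 1) := by
  rw [tpow_add_one]
  refine mul_mono (fun hf => hf) ?_
  split_ifs
  · exact tpow_antitone I (Order.lt_add_one_iff.1
      (limitPart_lt (add_pos_of_right zero_lt_one α).ne' (Order.not_isSuccLimit_add_one α)))
  · conv_rhs => rw [← tpow_one.{w} I]
    exact tpow_antitone I (Order.one_le_iff_ne_zero.2 hα)

theorem tpow_omega0_mul_add_one {γ : Ordinal.{w}} (hγ : γ ≠ 0) :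
    tpow I (ω * γ + 1) = (tpow I (ω * γ)).mul (tpow I (ω * γ)) := by
  have hω : ω ≤ ω * γ + 1 := (le_mul_left ω (pos_iff_ne_zero.2 hγ)).trans le_self_add
  rw [tpow_add_one, if_pos hω, limitPart_omega0_mul_add_one]

theorem tstar_le_tpow (α : Ordinal.{v}) : tstar I ≤ tpow I α :=
  fun hf => hf α

end CatIdeal

namespace HasLocalDCC

variable {C : Type u} [Category.{v} C] [Preadditive C]

theorem exists_mem_forall_mem {g : Ordinal.{w} → CatIdeal C} (hdcc : HasLocalDCC C)
    (hg : Antitone g) (X Y : C) {S : Set Ordinal.{w}} (hS : S.Nonempty) :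
    ∃ β₀ ∈ S, ∀ f : X ⟶ Y, (g β₀).mem f → ∀ β ∈ S, (g β).mem f := by
  -- otherwise iterating `next` gives a chain in `S` along which `g` strictly decreases at `(X, Y)`
  by_contra! hcon
  choose! f hf next hnext hnf using hcon
  have hle (β) (hβ : β ∈ S) : β ≤ next β := le_of_not_ge fun h => hnf β hβ (hg h (hf β hβ))
  obtain ⟨b, hb⟩ := hS
  let seq : ℕ → Ordinal.{w} := fun n => Nat.rec b (fun _ β => next β) n
  have hseq (n : ℕ) : seq n ∈ S := by
    induction n with
    | zero => exact hb
    | succ n ih => exact hnext _ ih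
  obtain ⟨n, hn⟩ := hdcc (fun n => g (seq n)) (fun n => hg (hle _ (hseq n))) X Y
  exact hnf _ (hseq n) ((hn (n + 1) n.le_succ _).2 (hf _ (hseq n)))

theorem exists_forall_le [EssentiallySmall.{w} C] {g : Ordinal.{w} → CatIdeal C}
    (hdcc : HasLocalDCC C) (hg : Antitone g) : ∃ A, ∀ β, g A ≤ g β := by
  -- up to isomorphism there is only a set of pairs of objects, so their stabilisation points
  -- have a supremum
  let E := equivSmallModel C
  have hpair (q : SmallModel C × SmallModel C) : ∃ β₀, ∀ f : E.inverse.obj q.1 ⟶ E.inverse.obj q.2,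
      (g β₀).mem f → ∀ β, (g β).mem f := by
    obtain ⟨β₀, -, h⟩ := hdcc.exists_mem_forall_mem hg (E.inverse.obj q.1) (E.inverse.obj q.2)
      (Set.univ_nonempty (α := Ordinal.{w}))
    exact ⟨β₀, fun f hf β => h f hf β trivial⟩
  choose β₀ hβ₀ using hpair
  have hA (q) : β₀ q ≤ iSup β₀ := le_ciSup (Ordinal.bddAbove_of_small (s := Set.range β₀)) q
  refine ⟨iSup β₀, fun β X Y f hf => ?_⟩
  let q := (E.functor.obj X, E.functor.obj Y)
  rw [← CatIdeal.mem_conj_iff _ (E.unitIso.app X) (E.unitIso.app Y)] at hf ⊢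
  exact hβ₀ q _ (hg (hA q) hf) β

end HasLocalDCC

section KrullSchmidt

variable {C : Type u} [Category.{v} C] [Preadditive C]

def CategoryTheory.Iso.conjRingEquiv {X Y : C} (e : X ≅ Y) : End X ≃+* End Y :=
  { e.conj with
    map_add' := fun a b =>
      (congrArg (e.inv ≫ ·) (Preadditive.add_comp _ _ _ a b e.hom)).trans
        (Preadditive.comp_add _ _ _ _ _ _) }

theorem isIndecomposableObj_of_isLocalRing {X : C} [IsLocalRing (End X)] :
    IsIndecomposableObj C X := by
  refine ⟨fun hX => one_ne_zero (α := End X) (hX.eq_of_src _ _), fun e he => ?_⟩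
  have he' : IsIdempotentElem (M := End X) e := he
  rcases IsLocalRing.isUnit_or_isUnit_of_add_one (add_sub_cancel (show End X from e) 1) with hu | hu
  · exact Or.inr ((IsIdempotentElem.iff_eq_one_of_isUnit hu).1 he')
  · exact Or.inl (sub_eq_self.1 ((IsIdempotentElem.iff_eq_one_of_isUnit hu).1 he'.one_sub))

theorem isLocalRing_end_of_isIndecomposableObj (hKS : IsKrullSchmidt C) {X : C}
    (hX : IsIndecomposableObj C X) : IsLocalRing (End X) := by
  obtain ⟨n, Y, hloc, p, s, hsp, -, hsum⟩ := hKS X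
  have hidem (i) : (p i ≫ s i) ≫ (p i ≫ s i) = p i ≫ s i := by
    rw [Category.assoc, reassoc_of% (hsp i)]
  obtain ⟨j, hj⟩ : ∃ j, p j ≫ s j = 𝟙 X := by
    by_contra! h
    refine hX.1 ((IsZero.iff_id_eq_zero X).2 ?_)
    rw [← hsum]
    exact Finset.sum_eq_zero fun i _ => (hX.2 _ (hidem i)).resolve_right (h i)
  have := hloc j
  exact (Iso.conjRingEquiv ⟨p j, s j, hj, hsp j⟩ : End X →+* End (Y j)).domain_isLocalRing

end KrullSchmidt

section KellyRadical

variable {C : Type u} [Category.{v} C] [Preadditive C]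

theorem isIso_id_sub_comp_comm {X Y : C} (a : X ⟶ Y) (b : Y ⟶ X) [IsIso (𝟙 X - a ≫ b)] :
    IsIso (𝟙 Y - b ≫ a) := by
  set u := inv (𝟙 X - a ≫ b)
  have h₁ : (𝟙 X - a ≫ b) ≫ u = 𝟙 X := IsIso.hom_inv_id _
  have h₂ : u ≫ (𝟙 X - a ≫ b) = 𝟙 X := IsIso.inv_hom_id _
  refine ⟨𝟙 Y + b ≫ u ≫ a, ?_, ?_⟩
  · calc (𝟙 Y - b ≫ a) ≫ (𝟙 Y + b ≫ u ≫ a) = 𝟙 Y + b ≫ ((𝟙 X - a ≫ b) ≫ u - 𝟙 X) ≫ a := by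
          simp only [Preadditive.sub_comp, Preadditive.comp_sub, Preadditive.comp_add,
            Category.id_comp, Category.comp_id, Category.assoc]
          abel
      _ = 𝟙 Y := by rw [h₁, sub_self, zero_comp, comp_zero, add_zero]
  · calc (𝟙 Y + b ≫ u ≫ a) ≫ (𝟙 Y - b ≫ a) = 𝟙 Y + b ≫ (u ≫ (𝟙 X - a ≫ b) - 𝟙 X) ≫ a := by
          simp only [Preadditive.add_comp, Preadditive.comp_sub, Preadditive.sub_comp,
            Category.id_comp, Category.comp_id, Category.assoc]
          abel
      _ = 𝟙 Y := by rw [h₂, sub_self, zero_comp, comp_zero, add_zero]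

def kellyRadical (C : Type u) [Category.{v} C] [Preadditive C] : CatIdeal C where
  mem {X Y} f := ∀ g : Y ⟶ X, IsIso (𝟙 X - f ≫ g)
  zero_mem g := by rw [zero_comp, sub_zero]; infer_instance
  add_mem := by
    intro X Y f f' hf hf' g
    have := hf g
    have := hf' (g ≫ inv (𝟙 X - f ≫ g))
    have key : 𝟙 X - (f + f') ≫ g = (𝟙 X - f' ≫ g ≫ inv (𝟙 X - f ≫ g)) ≫ (𝟙 X - f ≫ g) := by
      simp only [Preadditive.sub_comp, Category.assoc, IsIso.inv_hom_id, Category.comp_id,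
        Category.id_comp, Preadditive.add_comp]
      abel
    rw [key]
    infer_instance
  comp_mem_left := by
    intro X Y Z f h hf g
    simpa only [Category.assoc] using hf (h ≫ g)
  comp_mem_right := by
    intro X Y Z k g hg h
    have : IsIso (𝟙 Y - (g ≫ h) ≫ k) := by simpa only [Category.assoc] using hg (h ≫ k)
    simpa only [Category.assoc] using isIso_id_sub_comp_comm (g ≫ h) k

theorem isIso_of_comp_eq_id_of_isIndecomposableObj {X Y : C} (hX : IsIndecomposableObj C X)
    (hY : IsIndecomposableObj C Y) {f : X ⟶ Y} {r : Y ⟶ X} (hfr : f ≫ r = 𝟙 X) : IsIso f := by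
  have hidem : (r ≫ f) ≫ (r ≫ f) = r ≫ f := by rw [Category.assoc, reassoc_of% hfr]
  refine (hY.2 _ hidem).elim (fun h0 => absurd ?_ hX.1) fun h1 => ⟨r, hfr, h1⟩
  refine (IsZero.iff_id_eq_zero X).2 ?_
  calc 𝟙 X = f ≫ (r ≫ f) ≫ r := by rw [Category.assoc, reassoc_of% hfr, hfr]
    _ = 0 := by rw [h0, zero_comp, comp_zero]

theorem catRadical_le_kellyRadical (hKS : IsKrullSchmidt C) :
    catRadical C ≤ kellyRadical C := by
  refine CatIdeal.span_le ?_
  rintro X Y f ⟨hX, hY, hf⟩ g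
  have := isLocalRing_end_of_isIndecomposableObj hKS hX
  rcases IsLocalRing.isUnit_or_isUnit_of_add_one (add_sub_cancel (show End X from f ≫ g) 1)
    with hu | hu
  · have := (isUnit_iff_isIso _).1 hu
    exact absurd (isIso_of_comp_eq_id_of_isIndecomposableObj hX hY
      (r := g ≫ inv (f ≫ g)) (by rw [← Category.assoc, IsIso.hom_inv_id])) hf
  · exact (isUnit_iff_isIso _).1 hu

theorem id_eq_zero_of_id_mem_catRadical (hKS : IsKrullSchmidt C) {X : C}
    (h : (catRadical C).mem (𝟙 X)) : 𝟙 X = 0 := by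
  have := catRadical_le_kellyRadical hKS h (𝟙 X)
  rw [Category.comp_id, sub_self] at this
  exact isIsoZeroSelfEquiv X this

end KellyRadical

section Decomposition

variable {C : Type u} [Category.{v} C] [Preadditive C]

theorem CatIdeal.mem_of_components_mem (J : CatIdeal C) {X Y : C} {ι κ : Type*} [Fintype ι]
    [Fintype κ] {A : ι → C} {B : κ → C} {p : ∀ i, X ⟶ A i} {s : ∀ i, A i ⟶ X}
    (hX : ∑ i, p i ≫ s i = 𝟙 X) {p' : ∀ j, Y ⟶ B j} {s' : ∀ j, B j ⟶ Y}
    (hY : ∑ j, p' j ≫ s' j = 𝟙 Y) {f : X ⟶ Y} (h : ∀ i j, J.mem (s i ≫ f ≫ p' j)) :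
    J.mem f := by
  have hf : f = ∑ i, ∑ j, p i ≫ (s i ≫ f ≫ p' j) ≫ s' j := by
    conv_lhs => rw [← Category.id_comp f, ← Category.comp_id f, ← hX, ← hY]
    simp only [Preadditive.sum_comp, Preadditive.comp_sum, Category.assoc]
    exact Finset.sum_comm
  rw [hf]
  exact J.sum_mem _ fun i _ => J.sum_mem _ fun j _ =>
    J.comp_mem_right _ (J.comp_mem_left _ (h i j))

theorem mem_identityIdeal_sup_inf_catRadical {I : CatIdeal C} {A B : C}
    [IsLocalRing (End A)] [IsLocalRing (End B)] {g : A ⟶ B} (hg : I.mem g) :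
    (identityIdeal C I.idObjects ⊔ (I ⊓ catRadical C)).mem g := by
  by_cases hiso : IsIso g
  · have hA : I.mem (𝟙 A) := by simpa using I.comp_mem_left (inv g) hg
    refine le_sup_left (b := I ⊓ catRadical C) ?_
    simpa using (identityIdeal C _).comp_mem_left g (id_mem_identityIdeal (S := I.idObjects) hA)
  · exact le_sup_right (a := identityIdeal C I.idObjects) ⟨hg, CatIdeal.mem_span_of
      ⟨isIndecomposableObj_of_isLocalRing, isIndecomposableObj_of_isLocalRing, hiso⟩⟩

theorem le_identityIdeal_sup_inf_catRadical (hKS : IsKrullSchmidt C) (I : CatIdeal C) :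
    I ≤ identityIdeal C I.idObjects ⊔ (I ⊓ catRadical C) := by
  intro X Y f hf
  obtain ⟨m, A, hA, p, s, -, -, hX⟩ := hKS X
  obtain ⟨n, B, hB, p', s', -, -, hY⟩ := hKS Y
  refine CatIdeal.mem_of_components_mem _ hX hY fun i j => ?_
  have := hA i
  have := hB j
  exact mem_identityIdeal_sup_inf_catRadical (I.comp_mem_right _ (I.comp_mem_left _ hf))

end Decomposition

section Main

open CatIdeal Ordinal

variable {C : Type u} [Category.{v} C] [Preadditive C]

theorem le_identityIdeal_sup_inf_tpow (hKS : IsKrullSchmidt C) (hdcc : HasLocalDCC C)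
    {I : CatIdeal C} (hI : I.IsIdempotent) (α : Ordinal.{w}) :
    I ≤ identityIdeal C I.idObjects ⊔ (I ⊓ tpow (catRadical C) α) := by
  set T := identityIdeal C I.idObjects
  set R := catRadical C
  induction α using Ordinal.limitRecOn with
  | zero => rw [tpow_zero]; exact fun hf => le_sup_right (a := T) ⟨hf, trivial⟩
  | add_one a ih =>
    rcases eq_or_ne a 0 with rfl | ha
    · rw [zero_add, tpow_one]
      exact le_identityIdeal_sup_inf_catRadical hKS I
    have hsq : (I ⊓ tpow R a).mul (I ⊓ tpow R a) ≤ I ⊓ tpow R (a + 1) := by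
      intro X Y f hf
      have hsq' : ((tpow R a).mul (tpow R a)).mem f :=
        mul_mono (I := I ⊓ tpow R a) (J := I ⊓ tpow R a) (fun h => h.2) (fun h => h.2) hf
      exact ⟨(mul_le_left _ _ hf).1, mul_self_tpow_le_tpow_add_one R ha hsq'⟩
    intro X Y f hf
    obtain ⟨g, h, hg, hh, rfl⟩ := sup_mul_self_le T _ (mul_mono ih ih (hI ▸ hf : (I.mul I).mem f))
    exact ⟨g, h, hg, hsq hh, rfl⟩
  | limit α hα ih =>
    intro X Y f hf
    obtain ⟨β₀, hβ₀, hstable⟩ :=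
      hdcc.exists_mem_forall_mem (R.inf_tpow_antitone I) X Y (S := Set.Iio α) ⟨0, hα.bot_lt⟩
    obtain ⟨g, h, hg, hh, rfl⟩ := ih β₀ hβ₀ hf
    exact ⟨g, h, hg, ⟨hh.1, mem_tpow_of_isSuccLimit R hα fun β hβ => (hstable h hh β hβ).2⟩, rfl⟩

theorem CatIdeal.isIdempotent_tstar [EssentiallySmall.{v} C] (hdcc : HasLocalDCC C)
    (I : CatIdeal C) : I.tstar.IsIdempotent := by
  obtain ⟨A, hA⟩ := hdcc.exists_forall_le (tpow_antitone I)
  have htstar {β} (hβ : A ≤ β) : tpow I β = tstar I :=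
    le_antisymm (fun {_ _ _} hf γ => hA γ (tpow_antitone I hβ hf)) (tstar_le_tpow I β)
  -- at the successor of the limit ordinal `ω * (A + 1)`, `tpow` multiplies the limit power by itself
  have hA' : A ≤ ω * (A + 1) := le_self_add.trans (le_mul_right _ omega0_pos)
  calc tstar I = tpow I (ω * (A + 1) + 1) := (htstar (hA'.trans le_self_add)).symm
    _ = (tpow I (ω * (A + 1))).mul (tpow I (ω * (A + 1))) :=
      tpow_omega0_mul_add_one I (add_pos_of_right zero_lt_one A).ne'
    _ = (tstar I).mul (tstar I) := by rw [htstar hA']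

theorem CatIdeal.IsIdempotent.eq_identityIdeal_idObjects (hKS : IsKrullSchmidt C)
    (hdcc : HasLocalDCC C) (hz : (catTransRadical C).IsZeroIdeal) {I : CatIdeal C}
    (hI : I.IsIdempotent) : I = identityIdeal C I.idObjects := by
  refine le_antisymm (fun {X Y f} hf => ?_) (identityIdeal_idObjects_le I)
  obtain ⟨β₀, -, hβ₀⟩ :=
    hdcc.exists_mem_forall_mem ((catRadical C).inf_tpow_antitone I) X Y Set.univ_nonempty
  obtain ⟨g, h, hg, hh, rfl⟩ := le_identityIdeal_sup_inf_tpow hKS hdcc hI β₀ hf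
  rw [hz fun β => (hβ₀ h hh β trivial).2, add_zero]
  exact hg

end Main

open CategoryTheory in
theorem stmt9_general {C : Type u} [CategoryTheory.Category.{v} C] [CategoryTheory.Preadditive C] [CategoryTheory.EssentiallySmall.{v} C] (hKS : IsKrullSchmidt C) (hdcc : HasLocalDCC C) :
    (∀ I : CatIdeal C, I.IsIdempotent → ∃ S : Set C, I = identityIdeal C S) ↔
      (catTransRadical C).IsZeroIdeal := by
  refine ⟨fun H => ?_, fun hz I hI => ⟨_, hI.eq_identityIdeal_idObjects hKS hdcc hz⟩⟩
  obtain ⟨S, hS⟩ := H _ ((catRadical C).isIdempotent_tstar hdcc)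
  have hS0 (X : C) (hX : X ∈ S) : 𝟙 X = 0 := by
    have hX' : (catRadical C).tstar.mem (𝟙 X) := hS ▸ id_mem_identityIdeal hX
    refine id_eq_zero_of_id_mem_catRadical hKS ?_
    simpa only [CatIdeal.tpow_one] using CatIdeal.tstar_le_tpow _ 1 hX'
  rw [catTransRadical, hS, CatIdeal.isZeroIdeal_iff_le_bot]
  exact identityIdeal_le hS0

open CategoryTheory in
/-- Every idempotent ideal is generated by a set of identity morphisms iff
the transfinite radical vanishes. -/
theorem stmt9 {C : Type u} [CategoryTheory.Category.{v} C] [CategoryTheory.Preadditive C] [CategoryTheory.Limits.HasFiniteBiproducts C] [CategoryTheory.EssentiallySmall.{v} C] (hKS : IsKrullSchmidt C) (hdcc : HasLocalDCC C) :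
    (∀ I : CatIdeal C, I.IsIdempotent → ∃ S : Set C, I = identityIdeal C S) ↔
      (catTransRadical C).IsZeroIdeal :=
  stmt9_general hKS hdcc
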